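/- arXiv:1810.02188 — 7 statements merged into one kernel-verified Lean document; each statement's English description precedes it below -/
import Mathlib

section
/- Let m be an odd positive integer and let N be an integer with 1 < N ≤ 13 and N ≠ 8. If for every positive integer i, N is not equal to the least nonnegative remainder of i^(m+1) upon division by 6i+1, then 6^(m+1)·N − 1 is a prime number. -/
lemma six_pow_key (m N : ℕ) (hm : Odd m)
    (hN1 : 1 < N) (hN13 : N ≤ 13) (hN8 : N ≠ 8)
    (h : ∀ i : ℕ, 0 < i → N ≠ i ^ (m + 1) % (6 * i + 1))
    (q : ℕ) (hq1 : 1 < q) (hq6 : q % 6 = 1)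
    (hdvd : q ∣ 6 ^ (m + 1) * N - 1) : False := by
  obtain ⟨i, hi, rfl⟩ : ∃ i, 0 < i ∧ q = 6 * i + 1 := ⟨q / 6, by omega, by omega⟩
  haveI : NeZero (6 * i + 1) := ⟨by omega⟩
  have hpos : 1 ≤ 6 ^ (m + 1) * N :=
    Nat.one_le_iff_ne_zero.mpr (by positivity)
  have h0 : ((6 ^ (m + 1) * N - 1 : ℕ) : ZMod (6 * i + 1)) = 0 :=
    (ZMod.natCast_eq_zero_iff _ _).mpr hdvd
  have h1 : (6 : ZMod (6 * i + 1)) ^ (m + 1) * (N : ℕ) = 1 := by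
    have e : (6 ^ (m + 1) * N : ℕ) = (6 ^ (m + 1) * N - 1) + 1 := by omega
    have h1' := congrArg (Nat.cast : ℕ → ZMod (6 * i + 1)) e
    rw [Nat.cast_add, h0, zero_add] at h1'
    push_cast at h1'
    simpa using h1'
  have h2 : (6 : ZMod (6 * i + 1)) * (i : ℕ) + 1 = 0 := by
    have h2' := ZMod.natCast_self (6 * i + 1)
    push_cast at h2'
    linear_combination h2'
  have h3 : ((6 : ZMod (6 * i + 1)) * (i : ℕ)) ^ (m + 1) = 1 := by
    have e : (6 : ZMod (6 * i + 1)) * (i : ℕ) = -1 := by linear_combination h2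
    rw [e, Even.neg_one_pow (Odd.add_one hm)]
  have h4 : ((N : ℕ) : ZMod (6 * i + 1)) = ((i ^ (m + 1) : ℕ) : ZMod (6 * i + 1)) := by
    push_cast
    calc ((N : ℕ) : ZMod (6 * i + 1))
        = ((6 : ZMod (6 * i + 1)) * (i : ℕ)) ^ (m + 1) * N := by rw [h3, one_mul]
      _ = (i : ZMod (6 * i + 1)) ^ (m + 1) * ((6 : ZMod (6 * i + 1)) ^ (m + 1) * N) := by
          ring
      _ = (i : ZMod (6 * i + 1)) ^ (m + 1) := by rw [h1, mul_one]
  have hmod : N % (6 * i + 1) = i ^ (m + 1) % (6 * i + 1) :=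
    (ZMod.natCast_eq_natCast_iff _ _ _).mp h4
  have hi' := h i hi
  match i, hi, hi', hmod with
  | 1, _, hi', hmod =>
      norm_num at hmod
      omega
  | 2, _, hi', hmod =>
      norm_num at hmod hi'
      rcases Nat.lt_or_ge N 13 with hlt | hge
      · rw [Nat.mod_eq_of_lt hlt] at hmod
        exact hi' hmod
      · have hN : N = 13 := by omega
        rw [hN] at hmod
        simp at hmod
        have hd : (13 : ℕ) ∣ 2 ^ (m + 1) := Nat.dvd_of_mod_eq_zero hmod.symm
        have := Nat.Prime.dvd_of_dvd_pow (p := 13) (by norm_num) hd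
        omega
  | (k + 3), _, hi', hmod =>
      have hlt : N < 6 * (k + 3) + 1 := by omega
      rw [Nat.mod_eq_of_lt hlt] at hmod
      exact hi' hmod

theorem six_pow_m_theorem_part1 (m N : ℕ) (hm : Odd m) (hmpos : 0 < m)
    (hN1 : 1 < N) (hN13 : N ≤ 13) (hN8 : N ≠ 8)
    (h : ∀ i : ℕ, 0 < i → N ≠ i ^ (m + 1) % (6 * i + 1)) :
    Nat.Prime (6 ^ (m + 1) * N - 1) := by
  by_contra hc
  set M := 6 ^ (m + 1) * N - 1 with hMdef
  have h36 : 36 ≤ 6 ^ (m + 1) := by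
    calc (36 : ℕ) = 6 ^ 2 := by norm_num
      _ ≤ 6 ^ (m + 1) := Nat.pow_le_pow_right (by norm_num) (by omega)
  have hM1 : M + 1 = 6 ^ (m + 1) * N := by
    have : 36 * 2 ≤ 6 ^ (m + 1) * N := Nat.mul_le_mul h36 (by omega)
    omega
  have h6 : 6 ∣ M + 1 := by
    refine ⟨6 ^ m * N, ?_⟩
    rw [hM1, pow_succ]
    ring
  obtain ⟨b, hb⟩ := h6
  have hMbig : 71 ≤ M := by
    have : 36 * 2 ≤ 6 ^ (m + 1) * N := Nat.mul_le_mul h36 (by omega)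
    omega
  obtain ⟨p, pp, pdvd⟩ := Nat.exists_prime_and_dvd (show M ≠ 1 by omega)
  obtain ⟨a, ha⟩ := pdvd
  have hpM : p ≠ M := by rintro rfl; exact hc pp
  have hp2 : p ≠ 2 := by rintro rfl; omega
  have hp3 : p ≠ 3 := by rintro rfl; omega
  have hp1 : 2 ≤ p := pp.two_le
  have hpodd : p % 2 = 1 := Nat.odd_iff.mp (pp.odd_of_ne_two hp2)
  have hp3' : p % 3 ≠ 0 := by
    intro h3
    rcases pp.eq_one_or_self_of_dvd 3 (Nat.dvd_of_mod_eq_zero h3) with h' | h' <;> omega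
  have hp6 : p % 6 = 1 ∨ p % 6 = 5 := by omega
  rcases hp6 with hp6 | hp6
  · exact six_pow_key m N hm hN1 hN13 hN8 h p (by omega) hp6 ⟨a, ha⟩
  · -- q = M / p = a
    have ha1 : 1 < a := by
      rcases Nat.lt_or_ge a 2 with h' | h'
      · interval_cases a <;> omega
      · exact h'
    have haM : a ∣ M := ⟨p, by rw [ha]; ring⟩
    have ha6 : a % 6 = 1 := by
      have hmm := Nat.mul_mod p a 6
      rw [← ha, hp6] at hmm
      have : a % 6 < 6 := Nat.mod_lt _ (by norm_num)
      omega
    exact six_pow_key m N hm hN1 hN13 hN8 h a ha1 ha6 haM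
end

section
/- Let m be an odd positive integer and let N be an integer with N > 13. Suppose that for every positive integer i, N is not equal to the least nonnegative remainder of i^(m+1) upon division by 6i+1. Then 6^(m+1)·N − 1 is a prime number if and only if for all positive integers i and a, N ≠ (i^(m+1) mod (6i+1)) + (6i+1)·a. -/
private lemma lemA (m N i : ℕ) (hm : Odd m) (hN : 0 < N)
    (hmod : N % (6 * i + 1) = i ^ (m + 1) % (6 * i + 1)) :
    (6 * i + 1) ∣ 6 ^ (m + 1) * N - 1 := by
  haveI : NeZero (6 * i + 1) := ⟨by omega⟩
  have h1 : ((N : ℕ) : ZMod (6 * i + 1)) = ((i ^ (m + 1) : ℕ) : ZMod (6 * i + 1)) := by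
    rw [ZMod.natCast_eq_natCast_iff]; exact hmod
  have h2 : ((6 * i + 1 : ℕ) : ZMod (6 * i + 1)) = 0 := ZMod.natCast_self _
  have heven : Even (m + 1) := hm.add_one
  have h3 : ((6 ^ (m + 1) * N : ℕ) : ZMod (6 * i + 1)) = 1 := by
    push_cast at h1 h2 ⊢
    rw [h1]
    have hkey : (6 : ZMod (6 * i + 1)) * (i : ZMod (6 * i + 1)) = -1 := by
      linear_combination h2
    calc (6 : ZMod (6 * i + 1)) ^ (m + 1) * (i : ZMod (6 * i + 1)) ^ (m + 1)
        = ((6 : ZMod (6 * i + 1)) * (i : ZMod (6 * i + 1))) ^ (m + 1) := by ring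
      _ = (-1) ^ (m + 1) := by rw [hkey]
      _ = 1 := heven.neg_one_pow
  have hge : 1 ≤ 6 ^ (m + 1) * N := Nat.mul_pos (Nat.pow_pos (by norm_num)) hN
  have h4 : ((6 ^ (m + 1) * N - 1 : ℕ) : ZMod (6 * i + 1)) = 0 := by
    rw [Nat.cast_sub hge, h3]; simp
  exact (ZMod.natCast_eq_zero_iff _ _).mp h4

private lemma lemB (M : ℕ) (hM : ¬ M.Prime) (h2 : 1 < M) (h6 : M % 6 = 5) :
    ∃ d, d ∣ M ∧ 1 < d ∧ d < M ∧ d % 6 = 1 := by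
  have hMne : M ≠ 1 := by omega
  have hp : (M.minFac).Prime := Nat.minFac_prime hMne
  set p := M.minFac with hpdef
  have hpd : p ∣ M := Nat.minFac_dvd M
  have hpM : p ≠ M := by
    intro hE; exact hM (hE ▸ hp)
  have hplt : p < M := lt_of_le_of_ne (Nat.le_of_dvd (by omega) hpd) hpM
  have hp2 : 2 ≤ p := hp.two_le
  have hp2' : p % 2 = 1 := by
    rcases Nat.even_or_odd p with he | ho
    · exfalso
      have : 2 ∣ M := dvd_trans he.two_dvd hpd
      omega
    · exact Nat.odd_iff.mp ho
  have hp3 : p % 3 ≠ 0 := by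
    intro h3
    have : 3 ∣ M := dvd_trans (Nat.dvd_of_mod_eq_zero h3) hpd
    omega
  have hp6 : p % 6 = 1 ∨ p % 6 = 5 := by omega
  rcases hp6 with h1 | h5
  · exact ⟨p, hpd, hp.one_lt, hplt, h1⟩
  · obtain ⟨q, hq⟩ := hpd
    have hq1 : 1 < q := by
      rcases Nat.lt_or_ge q 2 with hq2 | hq2
      · interval_cases q <;> omega
      · omega
    have hqd : q ∣ M := ⟨p, by rw [hq]; ring⟩
    have hqlt : q < M := by
      nlinarith [hp.one_lt]
    have hq6 : q % 6 = 1 := by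
      have hmm : M % 6 = (p % 6) * (q % 6) % 6 := by
        rw [hq, Nat.mul_mod]
      rw [h5] at hmm
      have : q % 6 < 6 := Nat.mod_lt _ (by omega)
      interval_cases h : q % 6 <;> omega
    exact ⟨q, hqd, hq1, hqlt, hq6⟩

theorem six_pow_m_theorem_part2 (m N : ℕ) (hm : Odd m) (hmpos : 0 < m)
    (hN : 13 < N)
    (h : ∀ i : ℕ, 0 < i → N ≠ i ^ (m + 1) % (6 * i + 1)) :
    Nat.Prime (6 ^ (m + 1) * N - 1) ↔
      ∀ i a : ℕ, 0 < i → 0 < a → N ≠ i ^ (m + 1) % (6 * i + 1) + (6 * i + 1) * a := by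
  set P := 6 ^ (m + 1) with hPdef
  have hP36 : 36 ≤ P := by
    calc (36 : ℕ) = 6 ^ 2 := by norm_num
    _ ≤ 6 ^ (m + 1) := Nat.pow_le_pow_right (by norm_num) (by omega)
  have hPN : 36 * N ≤ P * N := Nat.mul_le_mul_right _ hP36
  constructor
  · intro hprime i a hi ha heq
    set d := 6 * i + 1 with hddef
    have hr : i ^ (m + 1) % d < d := Nat.mod_lt _ (by omega)
    have hmod : N % d = i ^ (m + 1) % d := by
      rw [heq, Nat.add_mul_mod_self_left]
      exact Nat.mod_mod_of_dvd _ dvd_rfl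
    have hdvd : d ∣ P * N - 1 := lemA m N i hm (by omega) hmod
    rcases (Nat.Prime.eq_one_or_self_of_dvd hprime d hdvd) with h1 | hMe
    · omega
    · have hdN : d ≤ N := by
        have : d * 1 ≤ d * a := Nat.mul_le_mul_left _ ha
        omega
      omega
  · intro hrhs
    by_contra hnp
    have h6P : (6 : ℕ) ∣ P := dvd_pow_self 6 (by omega)
    obtain ⟨k, hk⟩ := h6P
    have hM6 : (P * N - 1) % 6 = 5 := by
      have : P * N = 6 * (k * N) := by rw [hk]; ring
      omega
    have hM1 : 1 < P * N - 1 := by omega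
    obtain ⟨d, hdvd, hd1, hdM, hd6⟩ := lemB (P * N - 1) hnp hM1 hM6
    set i := d / 6 with hidef
    have hdi : d = 6 * i + 1 := by omega
    have hipos : 0 < i := by omega
    haveI : NeZero d := ⟨by omega⟩
    have hM0 : ((P * N - 1 : ℕ) : ZMod d) = 0 :=
      (ZMod.natCast_eq_zero_iff _ _).mpr hdvd
    have hPN1 : ((P * N : ℕ) : ZMod d) = 1 := by
      have hge : 1 ≤ P * N := by omega
      have : ((P * N - 1 : ℕ) : ZMod d) = ((P * N : ℕ) : ZMod d) - 1 := by
        rw [Nat.cast_sub hge]; simp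
      rw [this] at hM0
      exact sub_eq_zero.mp hM0
    have hd0 : ((d : ℕ) : ZMod d) = 0 := ZMod.natCast_self d
    have hkey : (6 : ZMod d) * (i : ZMod d) = -1 := by
      have hd0' : ((6 * i + 1 : ℕ) : ZMod d) = 0 := by rw [← hdi]; exact hd0
      push_cast at hd0'
      linear_combination hd0'
    have heven : Even (m + 1) := hm.add_one
    have hPi : (6 : ZMod d) ^ (m + 1) * (i : ZMod d) ^ (m + 1) = 1 := by
      calc (6 : ZMod d) ^ (m + 1) * (i : ZMod d) ^ (m + 1)
          = ((6 : ZMod d) * (i : ZMod d)) ^ (m + 1) := by ring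
        _ = (-1) ^ (m + 1) := by rw [hkey]
        _ = 1 := heven.neg_one_pow
    have hPN1' : (6 : ZMod d) ^ (m + 1) * (N : ZMod d) = 1 := by
      rw [hPdef] at hPN1; push_cast at hPN1; exact hPN1
    have hNi : ((N : ℕ) : ZMod d) = ((i ^ (m + 1) : ℕ) : ZMod d) := by
      push_cast
      linear_combination (i : ZMod d) ^ (m + 1) * hPN1' - (N : ZMod d) * hPi
    have hmm : N % d = i ^ (m + 1) % d := (ZMod.natCast_eq_natCast_iff _ _ _).mp hNi
    set a := N / d with hadef
    have hdam : d * a + N % d = N := by rw [hadef]; exact Nat.div_add_mod N d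
    have hNa : N = i ^ (m + 1) % d + d * a := by omega
    have hapos : 0 < a := by
      rcases Nat.eq_zero_or_pos a with h0 | h0
      · exfalso
        apply h i hipos
        rw [← hdi]
        rw [h0, Nat.mul_zero, Nat.add_zero] at hNa
        exact hNa
      · exact h0
    exact hrhs i a hipos hapos (by rw [← hdi]; exact hNa)
end

section
/- Let m be an odd positive integer and let N be a positive integer. Then 6^(m+1)·N − 1 is composite if and only if there exist a positive integer i and a nonnegative integer a such that N = (i^(m+1) mod (6i+1)) + (6i+1)·a. -/
theorem six_pow_m_composite_characterization (m N : ℕ) (hm : Odd m) (hmpos : 0 < m)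
    (hN : 0 < N) :
    ¬ Nat.Prime (6 ^ (m + 1) * N - 1) ↔
      ∃ i a : ℕ, 0 < i ∧ N = i ^ (m + 1) % (6 * i + 1) + (6 * i + 1) * a := by
  obtain ⟨k, hk⟩ := hm
  set M := 6 ^ (m + 1) * N - 1 with hM
  have hK : 6 ^ (m + 1) * N = 6 * (6 ^ m * N) := by rw [pow_succ]; ring
  have hKpos : 1 ≤ 6 ^ m * N := Nat.one_le_iff_ne_zero.mpr (by positivity)
  have hP1 : 1 ≤ 6 ^ (m + 1) * N := by omega
  have hM5 : M % 6 = 5 := by omega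
  have h36 : 36 ≤ 6 ^ (m + 1) := by
    calc (36 : ℕ) = 6 ^ 2 := by norm_num
    _ ≤ 6 ^ (m + 1) := Nat.pow_le_pow_right (by norm_num) (by omega)
  have hMge : 35 ≤ M := by
    have : 36 ≤ 6 ^ (m + 1) * N := le_trans h36 (Nat.le_mul_of_pos_right _ hN)
    omega
  have hme : Even (m + 1) := ⟨k + 1, by omega⟩
  -- key equivalence
  have key : ∀ i : ℕ, 0 < i →
      ((6 * i + 1) ∣ M ↔ N % (6 * i + 1) = i ^ (m + 1) % (6 * i + 1)) := by
    intro i hi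
    have hz : ((6 * i : ℕ) : ZMod (6 * i + 1)) = -1 := by
      have h0 := ZMod.natCast_self (6 * i + 1)
      push_cast at h0 ⊢
      linear_combination h0
    have h1 : ((6 * i : ℕ) : ZMod (6 * i + 1)) ^ (m + 1) = 1 := by
      rw [hz, Even.neg_one_pow hme]
    have h1' : (6 : ZMod (6 * i + 1)) ^ (m + 1) * (i : ZMod (6 * i + 1)) ^ (m + 1) = 1 := by
      rw [← mul_pow]; push_cast at h1; exact h1
    constructor
    · intro hdvd
      have hmeq : (1 : ℕ) ≡ 6 ^ (m + 1) * N [MOD 6 * i + 1] :=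
        (Nat.modEq_iff_dvd' hP1).mpr hdvd
      have hzz : ((1 : ℕ) : ZMod (6 * i + 1)) = ((6 ^ (m + 1) * N : ℕ) : ZMod (6 * i + 1)) :=
        (ZMod.natCast_eq_natCast_iff _ _ _).mpr hmeq
      push_cast at hzz
      have : ((N : ZMod (6 * i + 1))) = ((i : ZMod (6 * i + 1))) ^ (m + 1) := by
        calc (N : ZMod (6 * i + 1))
            = (6 ^ (m + 1) * (i : ZMod (6 * i + 1)) ^ (m + 1)) * N := by rw [h1']; ring
          _ = (i : ZMod (6 * i + 1)) ^ (m + 1) * (6 ^ (m + 1) * N) := by ring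
          _ = (i : ZMod (6 * i + 1)) ^ (m + 1) * 1 := by rw [← hzz]
          _ = (i : ZMod (6 * i + 1)) ^ (m + 1) := by ring
      have : ((N : ℕ) : ZMod (6 * i + 1)) = ((i ^ (m + 1) : ℕ) : ZMod (6 * i + 1)) := by
        push_cast; exact this
      exact (ZMod.natCast_eq_natCast_iff _ _ _).mp this
    · intro hmod
      have hmeq : ((N : ℕ) : ZMod (6 * i + 1)) = ((i ^ (m + 1) : ℕ) : ZMod (6 * i + 1)) :=
        (ZMod.natCast_eq_natCast_iff _ _ _).mpr hmod
      push_cast at hmeq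
      have hzz : ((6 ^ (m + 1) * N : ℕ) : ZMod (6 * i + 1)) = ((1 : ℕ) : ZMod (6 * i + 1)) := by
        push_cast
        rw [hmeq]
        rw [h1']
      have : (6 ^ (m + 1) * N : ℕ) ≡ 1 [MOD 6 * i + 1] :=
        (ZMod.natCast_eq_natCast_iff _ _ _).mp hzz
      exact (Nat.modEq_iff_dvd' hP1).mp this.symm
  constructor
  · intro hnp
    obtain ⟨d, hdvd, hd2, hdlt⟩ := Nat.exists_dvd_of_not_prime2 (by omega) hnp
    have h2M : ¬ 2 ∣ M := by omega
    have h3M : ¬ 3 ∣ M := by omega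
    have h2d : ¬ 2 ∣ d := fun h => h2M (h.trans hdvd)
    have h3d : ¬ 3 ∣ d := fun h => h3M (h.trans hdvd)
    have hd6 : d % 6 = 1 ∨ d % 6 = 5 := by omega
    -- obtain a divisor p = 6i+1 with i ≥ 1
    have hex : ∃ i : ℕ, 0 < i ∧ (6 * i + 1) ∣ M := by
      rcases hd6 with h | h
      · refine ⟨d / 6, by omega, ?_⟩
        have hde : 6 * (d / 6) + 1 = d := by omega
        rw [hde]; exact hdvd
      · -- use the cofactor e = M / d
        set e := M / d with he
        have hMe : M = d * e := (Nat.div_mul_cancel hdvd).symm.trans (by ring)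
        have hedvd : e ∣ M := ⟨d, by rw [hMe]; ring⟩
        have hepos : 0 < e := by
          rcases Nat.eq_zero_or_pos e with h0 | h0
          · rw [h0, mul_zero] at hMe; omega
          · exact h0
        have he1 : e ≠ 1 := by
          intro h1; rw [h1, mul_one] at hMe; omega
        have h2e : ¬ 2 ∣ e := fun hh => h2M (hh.trans hedvd)
        have h3e : ¬ 3 ∣ e := fun hh => h3M (hh.trans hedvd)
        have hmul : M % 6 = (d % 6) * (e % 6) % 6 := by rw [hMe, Nat.mul_mod]
        have he15 : e % 6 = 1 ∨ e % 6 = 5 := by omega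
        have he6 : e % 6 = 1 := by
          rcases he15 with h' | h'
          · exact h'
          · rw [h, h'] at hmul; omega
        refine ⟨e / 6, by omega, ?_⟩
        have hee : 6 * (e / 6) + 1 = e := by omega
        rw [hee]; exact hedvd
    obtain ⟨i, hi, hpd⟩ := hex
    have hmod := (key i hi).mp hpd
    refine ⟨i, N / (6 * i + 1), hi, ?_⟩
    have := Nat.mod_add_div N (6 * i + 1)
    omega
  · rintro ⟨i, a, hi, hNa⟩
    have hppos : 0 < 6 * i + 1 := by omega
    have hrlt : i ^ (m + 1) % (6 * i + 1) < 6 * i + 1 := Nat.mod_lt _ hppos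
    have hmod : N % (6 * i + 1) = i ^ (m + 1) % (6 * i + 1) := by
      rw [hNa, Nat.add_mul_mod_self_left]
      exact Nat.mod_mod_of_dvd _ dvd_rfl
    have hpd : (6 * i + 1) ∣ M := (key i hi).mpr hmod
    intro hP
    rcases (Nat.Prime.eq_one_or_self_of_dvd hP _ hpd) with h | h
    · omega
    · have : (6 * i + 1) % 6 = 1 := by omega
      omega
end

section
/- Let m be an odd positive integer and let N be a positive integer. Then 6^(m+1)·N − 1 is a prime number if and only if for every positive integer i, N is not congruent to i^(m+1) modulo 6i+1. -/
lemma six_dvd_key (m N i : ℕ) (hm : Odd m) (hN : 0 < N) (hi : 0 < i) :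
    (6 * i + 1) ∣ (6 ^ (m + 1) * N - 1) ↔ N ≡ i ^ (m + 1) [MOD 6 * i + 1] := by
  set q := 6 * i + 1 with hq
  have hpow : 0 < 6 ^ (m + 1) * N := by positivity
  have hcast : ((6 ^ (m + 1) * N - 1 : ℕ) : ZMod q)
      = (6 : ZMod q) ^ (m + 1) * (N : ZMod q) - 1 := by
    push_cast [Nat.cast_sub hpow]
    ring
  have hqz : ((q : ℕ) : ZMod q) = 0 := ZMod.natCast_self q
  have h6i : (6 : ZMod q) * (i : ZMod q) = -1 := by
    have : ((6 * i + 1 : ℕ) : ZMod q) = 0 := by rw [← hq]; exact hqz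
    push_cast at this
    linear_combination this
  have h1 : (6 : ZMod q) ^ (m + 1) * (i : ZMod q) ^ (m + 1) = 1 := by
    have he : Even (m + 1) := hm.add_one
    calc (6 : ZMod q) ^ (m + 1) * (i : ZMod q) ^ (m + 1)
        = ((6 : ZMod q) * i) ^ (m + 1) := (mul_pow _ _ _).symm
      _ = (-1 : ZMod q) ^ (m + 1) := by rw [h6i]
      _ = 1 := he.neg_one_pow
  rw [← ZMod.natCast_eq_zero_iff, hcast, ← ZMod.natCast_eq_natCast_iff]
  push_cast
  constructor
  · intro h
    have h' : (6 : ZMod q) ^ (m + 1) * (N : ZMod q) = 1 := by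
      linear_combination h
    linear_combination (i : ZMod q) ^ (m + 1) * h' - (N : ZMod q) * h1
  · intro h
    linear_combination (6 : ZMod q) ^ (m + 1) * h + h1

theorem six_pow_m_prime_iff_no_congruence (m N : ℕ) (hm : Odd m) (hmpos : 0 < m)
    (hN : 0 < N) :
    Nat.Prime (6 ^ (m + 1) * N - 1) ↔
      ∀ i : ℕ, 0 < i → ¬ N ≡ i ^ (m + 1) [MOD 6 * i + 1] := by
  set P := 6 ^ (m + 1) * N - 1 with hP
  have h36 : 36 ≤ 6 ^ (m + 1) * N := by
    have h1 : 6 ^ 2 ≤ 6 ^ (m + 1) := Nat.pow_le_pow_right (by norm_num) (by omega)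
    calc 36 = 6 ^ 2 * 1 := by norm_num
      _ ≤ 6 ^ (m + 1) * N := Nat.mul_le_mul h1 hN
  have h6dvd : 6 ∣ 6 ^ (m + 1) * N := by
    exact Dvd.dvd.mul_right (dvd_pow_self 6 (by omega)) N
  have hPmod : P % 6 = 5 := by omega
  have hP35 : 35 ≤ P := by omega
  constructor
  · intro hprime i hi hcong
    have hdvd : (6 * i + 1) ∣ P := (six_dvd_key m N i hm hN hi).mpr hcong
    rcases (Nat.Prime.eq_one_or_self_of_dvd hprime _ hdvd) with h | h
    · omega
    · have : (6 * i + 1) % 6 = 1 := by omega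
      omega
  · intro h
    by_contra hnp
    obtain ⟨a, hadvd, ha2, haP⟩ := Nat.exists_dvd_of_not_prime2 (by omega) hnp
    set b := P / a with hb
    have hab : a * b = P := Nat.mul_div_cancel' hadvd
    have hb2 : 2 ≤ b := by
      rcases Nat.lt_or_ge b 2 with h' | h'
      · interval_cases b <;> omega
      · exact h'
    have hno2 : ¬ 2 ∣ P := by omega
    have hno3 : ¬ 3 ∣ P := by
      intro ⟨k, hk⟩; omega
    have ha6 : a % 6 = 1 ∨ a % 6 = 5 := by
      have h2 : ¬ 2 ∣ a := fun hd => hno2 (hd.trans hadvd)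
      have h3 : ¬ 3 ∣ a := fun hd => hno3 (hd.trans hadvd)
      omega
    have hbdvd : b ∣ P := Nat.div_dvd_of_dvd hadvd
    have hb6 : b % 6 = 1 ∨ b % 6 = 5 := by
      have h2 : ¬ 2 ∣ b := fun hd => hno2 (hd.trans hbdvd)
      have h3 : ¬ 3 ∣ b := fun hd => hno3 (hd.trans hbdvd)
      omega
    have hmul : (a % 6) * (b % 6) % 6 = 5 := by
      rw [← Nat.mul_mod, hab]; exact hPmod
    -- one of a, b is ≡ 1 mod 6 and ≥ 7
    have : ∃ d, d ∣ P ∧ 2 ≤ d ∧ d % 6 = 1 := by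
      rcases ha6 with h' | h'
      · exact ⟨a, hadvd, ha2, h'⟩
      · refine ⟨b, hbdvd, hb2, ?_⟩
        rcases hb6 with h'' | h''
        · exact h''
        · rw [h', h''] at hmul; omega
    obtain ⟨d, hddvd, hd2, hd6⟩ := this
    have hi : 0 < d / 6 := by omega
    have hdeq : 6 * (d / 6) + 1 = d := by omega
    have := (six_dvd_key m N (d / 6) hm hN hi).mp (by rw [hdeq]; exact hddvd)
    exact h (d / 6) hi this
end

section
/- For every positive integer n, the number 6n − 1 is composite if and only if there exist positive integers i and j such that n = 6ij − i + j. -/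
lemma six_key (n a b : ℕ) (ha : 1 < a) (hb : 1 < b)
    (ha1 : a % 6 = 1) (hb5 : b % 6 = 5) (h : 6 * n - 1 = a * b) :
    ∃ i j : ℕ, 0 < i ∧ 0 < j ∧ n = 6 * i * j - i + j := by
  refine ⟨a / 6, b / 6 + 1, by omega, by omega, ?_⟩
  have hab : 1 ≤ a * b := Nat.one_le_iff_ne_zero.mpr (by positivity)
  have h3 : 6 * n = a * b + 1 := by omega
  set i := a / 6 with hi
  set j := b / 6 + 1 with hj
  have h1 : a = 6 * i + 1 := by omega
  have h2 : b + 1 = 6 * j := by omega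
  have h4 : a * b = 6 * (i * b) + b := by rw [h1]; ring
  have h5 : i * b + i = 6 * (i * j) := by
    calc i * b + i = i * (b + 1) := by ring
    _ = i * (6 * j) := by rw [h2]
    _ = 6 * (i * j) := by ring
  have hg : 6 * i * j = 6 * (i * j) := by ring
  rw [hg]
  generalize hP : i * b = P at h5
  generalize hQ : i * j = Q at h5 ⊢
  rw [h4, hP] at h3
  omega

theorem six_n_sub_one_composite_iff (n : ℕ) (hn : 0 < n) :
    ¬ Nat.Prime (6 * n - 1) ↔
      ∃ i j : ℕ, 0 < i ∧ 0 < j ∧ n = 6 * i * j - i + j := by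
  constructor
  · intro h
    obtain ⟨m, hdvd, hm2, hmlt⟩ := Nat.exists_dvd_of_not_prime2 (by omega) h
    obtain ⟨k, hk⟩ := hdvd
    have hk0 : k ≠ 0 := by rintro rfl; simp at hk; omega
    have hk1' : k ≠ 1 := by rintro rfl; simp at hk; omega
    have hk1 : 1 < k := by omega
    have hmod : (m % 6) * (k % 6) % 6 = 5 := by
      have hh : (m * k) % 6 = 5 := by rw [← hk]; omega
      rwa [Nat.mul_mod] at hh
    have hdisj : (m % 6 = 1 ∧ k % 6 = 5) ∨ (m % 6 = 5 ∧ k % 6 = 1) := by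
      have ha : m % 6 < 6 := Nat.mod_lt _ (by norm_num)
      have hb : k % 6 < 6 := Nat.mod_lt _ (by norm_num)
      set a := m % 6 with ha'
      set b := k % 6 with hb'
      interval_cases a <;> interval_cases b <;> omega
    rcases hdisj with ⟨h1, h2⟩ | ⟨h1, h2⟩
    · exact six_key n m k hm2 hk1 h1 h2 hk
    · exact six_key n k m hk1 hm2 h2 h1 (by rw [hk, Nat.mul_comm])
  · rintro ⟨i, j, hi, hj, rfl⟩ hp
    have hile : i ≤ 6 * i * j := by nlinarith
    have hfac : 6 * (6 * i * j - i + j) - 1 = (6 * i + 1) * (6 * j - 1) := by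
      have h1 : 1 ≤ 6 * j := by omega
      have h2 : 1 ≤ 6 * (6 * i * j - i + j) := by omega
      zify [hile, h1, h2]
      ring
    have hdvd : (6 * i + 1) ∣ (6 * (6 * i * j - i + j) - 1) := ⟨6 * j - 1, hfac⟩
    rcases hp.eq_one_or_self_of_dvd _ hdvd with h | h
    · omega
    · have hb5 : 5 ≤ 6 * j - 1 := by omega
      have ha7 : 7 ≤ 6 * i + 1 := by omega
      rw [hfac] at h
      nlinarith
end

section
/- Let A, B, q be positive integers and p a nonnegative integer with q ≤ A and A·q > B, and set i = A·p + q. Then the division of i² by A·i + B has quotient p and remainder i·q − B·p; in particular, i² mod (A·i + B) = i·q − B·p. -/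
theorem mod_theorem_for_sq (A B q p i : ℕ) (hA : 0 < A) (hB : 0 < B) (hq : 0 < q)
    (hqA : q ≤ A) (hAqB : B < A * q) (hi : i = A * p + q) :
    i ^ 2 / (A * i + B) = p ∧ i ^ 2 % (A * i + B) = i * q - B * p := by
  have hBp : B * p ≤ i * q := by
    subst hi
    calc B * p ≤ (A * q) * p := Nat.mul_le_mul_right p hAqB.le
    _ ≤ (A * p + q) * q := by nlinarith
  rw [Nat.div_mod_unique (by positivity)]
  constructor
  · subst hi; zify [hBp]; ring
  · have hiq : i * q ≤ i * A := Nat.mul_le_mul_left i hqA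
    rw [mul_comm A i]; omega
end

section
/- For every nonnegative integer p the following hold: (6p+1)² mod (6(6p+1)+1) = 5p+1; (6p+2)² mod (6(6p+2)+1) = 11p+4; (6p+3)² mod (6(6p+3)+1) = 17p+9; (6p+4)² mod (6(6p+4)+1) = 23p+16; (6p+5)² mod (6(6p+5)+1) = 29p+25; and (6p+6)² mod (6(6p+6)+1) = 35p+36. Consequently, every value of i² mod (6i+1) for a positive integer i is given by one of these six linear expressions. -/
theorem sq_mod_six_i_plus_one_cases :
    (∀ p : ℕ,
      (6 * p + 1) ^ 2 % (6 * (6 * p + 1) + 1) = 5 * p + 1 ∧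
      (6 * p + 2) ^ 2 % (6 * (6 * p + 2) + 1) = 11 * p + 4 ∧
      (6 * p + 3) ^ 2 % (6 * (6 * p + 3) + 1) = 17 * p + 9 ∧
      (6 * p + 4) ^ 2 % (6 * (6 * p + 4) + 1) = 23 * p + 16 ∧
      (6 * p + 5) ^ 2 % (6 * (6 * p + 5) + 1) = 29 * p + 25 ∧
      (6 * p + 6) ^ 2 % (6 * (6 * p + 6) + 1) = 35 * p + 36) ∧
    (∀ i : ℕ, 0 < i → ∃ p : ℕ,
      i ^ 2 % (6 * i + 1) = 5 * p + 1 ∨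
      i ^ 2 % (6 * i + 1) = 11 * p + 4 ∨
      i ^ 2 % (6 * i + 1) = 17 * p + 9 ∨
      i ^ 2 % (6 * i + 1) = 23 * p + 16 ∨
      i ^ 2 % (6 * i + 1) = 29 * p + 25 ∨
      i ^ 2 % (6 * i + 1) = 35 * p + 36) := by
  have hmain : ∀ p : ℕ,
      (6 * p + 1) ^ 2 % (6 * (6 * p + 1) + 1) = 5 * p + 1 ∧
      (6 * p + 2) ^ 2 % (6 * (6 * p + 2) + 1) = 11 * p + 4 ∧
      (6 * p + 3) ^ 2 % (6 * (6 * p + 3) + 1) = 17 * p + 9 ∧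
      (6 * p + 4) ^ 2 % (6 * (6 * p + 4) + 1) = 23 * p + 16 ∧
      (6 * p + 5) ^ 2 % (6 * (6 * p + 5) + 1) = 29 * p + 25 ∧
      (6 * p + 6) ^ 2 % (6 * (6 * p + 6) + 1) = 35 * p + 36 := by
    intro p
    refine ⟨?_, ?_, ?_, ?_, ?_, ?_⟩
    · have e : (6 * p + 1) ^ 2 = (6 * (6 * p + 1) + 1) * p + (5 * p + 1) := by ring
      rw [e, Nat.mul_add_mod, Nat.mod_eq_of_lt (by omega)]
    · have e : (6 * p + 2) ^ 2 = (6 * (6 * p + 2) + 1) * p + (11 * p + 4) := by ring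
      rw [e, Nat.mul_add_mod, Nat.mod_eq_of_lt (by omega)]
    · have e : (6 * p + 3) ^ 2 = (6 * (6 * p + 3) + 1) * p + (17 * p + 9) := by ring
      rw [e, Nat.mul_add_mod, Nat.mod_eq_of_lt (by omega)]
    · have e : (6 * p + 4) ^ 2 = (6 * (6 * p + 4) + 1) * p + (23 * p + 16) := by ring
      rw [e, Nat.mul_add_mod, Nat.mod_eq_of_lt (by omega)]
    · have e : (6 * p + 5) ^ 2 = (6 * (6 * p + 5) + 1) * p + (29 * p + 25) := by ring
      rw [e, Nat.mul_add_mod, Nat.mod_eq_of_lt (by omega)]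
    · have e : (6 * p + 6) ^ 2 = (6 * (6 * p + 6) + 1) * p + (35 * p + 36) := by ring
      rw [e, Nat.mul_add_mod, Nat.mod_eq_of_lt (by omega)]
  refine ⟨hmain, fun i hi => ?_⟩
  obtain ⟨p, hp⟩ : ∃ p, i = 6 * p + 1 ∨ i = 6 * p + 2 ∨ i = 6 * p + 3 ∨
      i = 6 * p + 4 ∨ i = 6 * p + 5 ∨ i = 6 * p + 6 := ⟨(i - 1) / 6, by omega⟩
  obtain ⟨h1, h2, h3, h4, h5, h6⟩ := hmain p
  refine ⟨p, ?_⟩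
  rcases hp with rfl | rfl | rfl | rfl | rfl | rfl
  · exact Or.inl h1
  · exact Or.inr (Or.inl h2)
  · exact Or.inr (Or.inr (Or.inl h3))
  · exact Or.inr (Or.inr (Or.inr (Or.inl h4)))
  · exact Or.inr (Or.inr (Or.inr (Or.inr (Or.inl h5))))
  · exact Or.inr (Or.inr (Or.inr (Or.inr (Or.inr h6))))
end
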